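/- arXiv:2410.14190 — 2 statements merged into one kernel-verified Lean document; each statement's English description precedes it below -/
import Mathlib

section
/- If n is a positive integer that is not a perfect square, then the number of two-color partitions of n into distinct parts with even parts only in blue and an even number of even parts equals the number of such partitions with an odd number of even parts. -/
open scoped BigOperators

noncomputable def qPoch (a q : ℂ) (n : ℕ) : ℂ := ∏ j ∈ Finset.range n, (1 - a * q ^ j)

noncomputable def qPochInf (a q : ℂ) : ℂ := ∏' j : ℕ, (1 - a * q ^ j)

/-- Two-color partitions of `n` into distinct parts (a finset of blue parts and a
finset of green parts), where even parts occur only in blue (green parts are odd). -/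
def IsEPartition (n : ℕ) (p : Finset ℕ × Finset ℕ) : Prop :=
  (∀ b ∈ p.1, 0 < b) ∧ (∀ g ∈ p.2, Odd g) ∧ p.1.sum id + p.2.sum id = n

/-!
The signed count `E₀(n) - E₁(n)` is the coefficient of `qⁿ` in
`(q²; q²)_∞ (-q; q²)_∞²`, which by the Jacobi triple product at `z = 1` is
`∑_{k ∈ ℤ} q^(k²)`.
We work with the finite version: the finite Jacobi triple product gives
`∏_{j<N} (1 + q^(2j+1))² = ∑_{k ≤ 2N} q^((k-N)²) [2N, k]_{q²}`, and multiplying by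
`(q²; q²)_N` the term of index `k` becomes `q^((k-N)²) ((q;q)_N [2N, k]_q)(q²)`, where
`(q;q)_N [2N, k]_q ≡ 1 (mod q^(t+1))` for `t ≤ min(k, 2N - k, N)` because
`[2N, k]_q (q;q)_k (q;q)_{2N-k} = (q;q)_{2N}`. For `N > n` this kills every contribution to
`qⁿ` except those with `(k - N)² = n`, and there are none when `n` is not a square.
-/

open Polynomial Finset

noncomputable section

lemma pow_mul_pow_eq {M : Type*} [Monoid M] (x : M) {a b c d : ℕ} (h : a + b = c + d) :
    x ^ a * x ^ b = x ^ c * x ^ d := by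
  rw [← pow_add, ← pow_add, h]

section QuadraticFactor

variable {R : Type*} [Semiring R] (p : R[X]) (a b c : R)

lemma coeff_mul_quadratic_zero : (p * (C a + C b * X + C c * X ^ 2)).coeff 0 = p.coeff 0 * a := by
  simp [mul_add, ← mul_assoc]

lemma coeff_mul_quadratic_one :
    (p * (C a + C b * X + C c * X ^ 2)).coeff 1 = p.coeff 1 * a + p.coeff 0 * b := by
  simp [mul_add, ← mul_assoc, coeff_mul_C, coeff_mul_X_pow']

lemma coeff_mul_quadratic_add_two (e : ℕ) :
    (p * (C a + C b * X + C c * X ^ 2)).coeff (e + 2) =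
      p.coeff (e + 2) * a + p.coeff (e + 1) * b + p.coeff e * c := by
  simp only [mul_add, ← mul_assoc, coeff_add, coeff_mul_C, coeff_mul_X, coeff_mul_X_pow]

end QuadraticFactor

lemma prod_Icc_one_two_mul {M : Type*} [CommMonoid M] (f : ℕ → M) (N : ℕ) :
    ∏ b ∈ Icc 1 (2 * N), f b = ∏ j ∈ range N, f (2 * j + 1) * f (2 * j + 2) := by
  induction N with
  | zero => simp
  | succ N ih =>
    rw [show 2 * (N + 1) = 2 * N + 1 + 1 by ring, prod_Icc_succ_top (by omega),
      prod_Icc_succ_top (by omega), ih, prod_range_succ, mul_assoc]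

lemma prod_ite_even_neg_one (B : Finset ℕ) :
    ∏ b ∈ B, (if Even b then (-1 : ℤ) else 1) = (-1) ^ #(B.filter fun b => Even b) := by
  rw [prod_ite, prod_const, prod_const_one, mul_one]

lemma sum_neg_one_pow_eq_card_sub_card {α : Type*} (s : Finset α) (f : α → ℕ) :
    ∑ x ∈ s, (-1 : ℤ) ^ f x =
      #(s.filter fun x => Even (f x)) - #(s.filter fun x => Odd (f x)) := by
  have h : ∀ x ∈ s, (-1 : ℤ) ^ f x = if Even (f x) then 1 else -1 := fun x _ => by
    split_ifs with h
    exacts [h.neg_one_pow, (Nat.not_even_iff_odd.1 h).neg_one_pow]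
  simp [sum_congr rfl h, sum_ite, Nat.not_even_iff_odd, sub_eq_add_neg]

-- The Gaussian binomial `[n, k]_q`; the truncated `n - k` only occurs where `qBinom n k = 0`.
def qBinom : ℕ → ℕ → ℤ[X]
  | _, 0 => 1
  | 0, _ + 1 => 0
  | n + 1, k + 1 => qBinom n (k + 1) + X ^ (n - k) * qBinom n k

@[simp] lemma qBinom_zero_right (n : ℕ) : qBinom n 0 = 1 := by cases n <;> rfl

lemma qBinom_succ_succ (n k : ℕ) :
    qBinom (n + 1) (k + 1) = qBinom n (k + 1) + X ^ (n - k) * qBinom n k := rfl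

lemma qBinom_eq_zero_of_lt {n k : ℕ} (h : n < k) : qBinom n k = 0 := by
  induction n generalizing k with
  | zero => obtain ⟨k, rfl⟩ := Nat.exists_eq_add_one_of_ne_zero (by omega : k ≠ 0); rfl
  | succ n ih =>
    obtain ⟨k, rfl⟩ := Nat.exists_eq_add_one_of_ne_zero (by omega : k ≠ 0)
    rw [qBinom_succ_succ, ih (by omega), ih (by omega), mul_zero, add_zero]

@[simp] lemma qBinom_self (n : ℕ) : qBinom n n = 1 := by
  induction n with
  | zero => rfl
  | succ n ih => rw [qBinom_succ_succ, qBinom_eq_zero_of_lt n.lt_succ_self, ih, Nat.sub_self]; ring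

def qPochPoly (n : ℕ) : ℤ[X] := ∏ j ∈ range n, (1 - X ^ (j + 1))

lemma qPochPoly_succ (n : ℕ) : qPochPoly (n + 1) = qPochPoly n * (1 - X ^ (n + 1)) :=
  prod_range_succ _ n

lemma eval_zero_qPochPoly (n : ℕ) : (qPochPoly n).eval 0 = 1 := by
  simp [qPochPoly, eval_prod]

lemma qPochPoly_ne_zero (n : ℕ) : qPochPoly n ≠ 0 := fun h => by
  simpa [h] using eval_zero_qPochPoly n

lemma qBinom_mul_qPochPoly {n k : ℕ} (hk : k ≤ n) :
    qBinom n k * (qPochPoly k * qPochPoly (n - k)) = qPochPoly n := by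
  induction n generalizing k with
  | zero =>
    obtain rfl : k = 0 := by omega
    simp [qPochPoly]
  | succ n ih =>
    rcases k with _ | k
    · simp [qPochPoly]
    rcases Nat.lt_or_ge k n with hkn | hkn
    · obtain ⟨d, rfl⟩ := Nat.exists_eq_add_of_lt hkn
      have h1 := ih (k := k + 1) (by omega)
      have h2 := ih (k := k) (by omega)
      rw [show k + d + 1 - (k + 1) = d by omega, qPochPoly_succ] at h1
      rw [show k + d + 1 - k = d + 1 by omega, qPochPoly_succ] at h2
      rw [qBinom_succ_succ, show k + d + 1 + 1 - (k + 1) = d + 1 by omega,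
        show k + d + 1 - k = d + 1 by omega, qPochPoly_succ, qPochPoly_succ, qPochPoly_succ]
      linear_combination (1 - X ^ (d + 1)) * h1 + X ^ (d + 1) * (1 - X ^ (k + 1)) * h2
    · obtain rfl : k = n := by omega
      simp [qPochPoly]

lemma qBinom_symm {n k : ℕ} (hk : k ≤ n) : qBinom n (n - k) = qBinom n k := by
  refine mul_right_cancel₀ (mul_ne_zero (qPochPoly_ne_zero k) (qPochPoly_ne_zero (n - k))) ?_
  have h := qBinom_mul_qPochPoly (Nat.sub_le n k)
  rw [Nat.sub_sub_self hk] at h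
  rw [qBinom_mul_qPochPoly hk, mul_comm (qPochPoly k), h]

lemma qBinom_succ_succ' (n k : ℕ) :
    qBinom (n + 1) (k + 1) = X ^ (k + 1) * qBinom n (k + 1) + qBinom n k := by
  rcases lt_trichotomy k n with hkn | rfl | hnk
  · calc qBinom (n + 1) (k + 1)
        = qBinom (n + 1) (n - k - 1 + 1) := by
          rw [show n - k - 1 + 1 = n + 1 - (k + 1) by omega, qBinom_symm (by omega)]
      _ = qBinom n (n - k - 1 + 1) + X ^ (n - (n - k - 1)) * qBinom n (n - k - 1) :=
          qBinom_succ_succ _ _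
      _ = qBinom n k + X ^ (k + 1) * qBinom n (k + 1) := by
          rw [show n - k - 1 + 1 = n - k by omega, qBinom_symm hkn.le,
            show n - (n - k - 1) = k + 1 by omega, show n - k - 1 = n - (k + 1) by omega,
            qBinom_symm hkn]
      _ = _ := add_comm _ _
  · simp [qBinom_eq_zero_of_lt (Nat.lt_succ_self k)]
  · simp [qBinom_eq_zero_of_lt hnk, qBinom_eq_zero_of_lt (Nat.succ_lt_succ hnk),
      qBinom_eq_zero_of_lt (hnk.trans (Nat.lt_succ_self k))]

lemma qBinom_add_two_add_two (n e : ℕ) :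
    qBinom (n + 2) (e + 2) =
      X ^ (e + 2) * qBinom n (e + 2) + (1 + X ^ (n + 1)) * qBinom n (e + 1) +
        X ^ (n - e) * qBinom n e := by
  rw [qBinom_succ_succ' (n + 1), qBinom_succ_succ n (e + 1), qBinom_succ_succ n e]
  rcases Nat.lt_or_ge e n with hen | hen
  · rw [show n - (e + 1) = n - e - 1 by omega]
    have : (X : ℤ[X]) ^ (e + 2) * X ^ (n - e - 1) = X ^ (n + 1) := by
      rw [← pow_add]; congr 1; omega
    linear_combination qBinom n (e + 1) * this
  · rw [qBinom_eq_zero_of_lt (by omega : n < e + 1), qBinom_eq_zero_of_lt (by omega : n < e + 2)]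
    ring

lemma qBinom_add_two_one (n : ℕ) : qBinom (n + 2) 1 = X * qBinom n 1 + (1 + X ^ (n + 1)) := by
  rw [qBinom_succ_succ' (n + 1), qBinom_succ_succ n 0]
  simp only [qBinom_zero_right, Nat.sub_zero]
  ring

def jacobiExp (N k : ℕ) : ℕ := ((k : ℤ) - N).natAbs ^ 2

lemma cast_jacobiExp (N k : ℕ) : (jacobiExp N k : ℤ) = ((k : ℤ) - N) ^ 2 := by
  simp [jacobiExp]

def jacobiCoeff (N k : ℕ) : ℤ[X] := X ^ jacobiExp N k * expand ℤ 2 (qBinom (2 * N) k)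

lemma jacobiCoeff_eq_zero {N k : ℕ} (h : 2 * N < k) : jacobiCoeff N k = 0 := by
  simp [jacobiCoeff, qBinom_eq_zero_of_lt h]

lemma jacobiCoeff_succ_zero (N : ℕ) :
    jacobiCoeff (N + 1) 0 = jacobiCoeff N 0 * X ^ (2 * N + 1) := by
  simp only [jacobiCoeff, qBinom_zero_right, map_one, mul_one, ← pow_add]
  congr 1
  zify; push_cast [cast_jacobiExp]; ring

lemma jacobiCoeff_succ_one (N : ℕ) :
    jacobiCoeff (N + 1) 1 =
      jacobiCoeff N 1 * X ^ (2 * N + 1) + jacobiCoeff N 0 * (1 + X ^ (4 * N + 2)) := by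
  have h0 : jacobiExp (N + 1) 1 = jacobiExp N 0 := by
    zify; push_cast [cast_jacobiExp]; ring
  have h1 : jacobiExp N 0 + 2 = jacobiExp N 1 + (2 * N + 1) := by
    zify; push_cast [cast_jacobiExp]; ring
  simp only [jacobiCoeff, show 2 * (N + 1) = 2 * N + 2 by ring, qBinom_add_two_one,
    qBinom_zero_right, map_add, map_mul, map_pow, expand_X, map_one, ← pow_mul]
  rw [h0]
  linear_combination expand ℤ 2 (qBinom (2 * N) 1) * pow_mul_pow_eq (X : ℤ[X]) h1

lemma jacobiCoeff_succ_add_two (N e : ℕ) :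
    jacobiCoeff (N + 1) (e + 2) = jacobiCoeff N (e + 2) * X ^ (2 * N + 1) +
      jacobiCoeff N (e + 1) * (1 + X ^ (4 * N + 2)) + jacobiCoeff N e * X ^ (2 * N + 1) := by
  rcases Nat.lt_or_ge (2 * N) e with he | he
  · simp [jacobiCoeff_eq_zero, he, (by omega : 2 * N < e + 1), (by omega : 2 * N < e + 2),
      (by omega : 2 * (N + 1) < e + 2)]
  have h0 : jacobiExp (N + 1) (e + 2) = jacobiExp N (e + 1) := by
    zify; push_cast [cast_jacobiExp]; ring
  have h1 : jacobiExp N (e + 1) + 2 * (e + 2) = jacobiExp N (e + 2) + (2 * N + 1) := by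
    zify; push_cast [cast_jacobiExp]; ring
  have h2 : jacobiExp N (e + 1) + 2 * (2 * N - e) = jacobiExp N e + (2 * N + 1) := by
    zify [he]; push_cast [cast_jacobiExp]; ring
  simp only [jacobiCoeff, show 2 * (N + 1) = 2 * N + 2 by ring, qBinom_add_two_add_two,
    map_add, map_mul, map_pow, expand_X, map_one, ← pow_mul]
  rw [h0]
  linear_combination expand ℤ 2 (qBinom (2 * N) (e + 2)) * pow_mul_pow_eq (X : ℤ[X]) h1 +
    expand ℤ 2 (qBinom (2 * N) e) * pow_mul_pow_eq (X : ℤ[X]) h2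

/-- The finite Jacobi triple product `∏_{j<N} (1 + z q^(2j+1)) (z + q^(2j+1))`, with `q` the
variable of `ℤ[X]` and `z` the variable of `ℤ[X][X]`. -/
def jacobiProd (N : ℕ) : ℤ[X][X] :=
  ∏ j ∈ range N, (1 + C (X ^ (2 * j + 1)) * X) * (X + C (X ^ (2 * j + 1)))

lemma jacobiProd_succ (N : ℕ) :
    jacobiProd (N + 1) = jacobiProd N *
      (C (X ^ (2 * N + 1)) + C (1 + X ^ (4 * N + 2)) * X + C (X ^ (2 * N + 1)) * X ^ 2) := by
  rw [jacobiProd, prod_range_succ, ← jacobiProd, show 4 * N + 2 = (2 * N + 1) * 2 by ring,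
    pow_mul]
  simp only [map_add, map_one, map_pow]
  ring

theorem coeff_jacobiProd (N k : ℕ) : (jacobiProd N).coeff k = jacobiCoeff N k := by
  induction N generalizing k with
  | zero =>
    rcases k with _ | k
    · simp [jacobiProd, jacobiCoeff, jacobiExp]
    · simp [jacobiProd, jacobiCoeff, coeff_one, qBinom_eq_zero_of_lt (Nat.succ_pos k)]
  | succ N ih =>
    rcases k with _ | _ | e
    · rw [jacobiProd_succ, coeff_mul_quadratic_zero, ih, jacobiCoeff_succ_zero]
    · rw [jacobiProd_succ, coeff_mul_quadratic_one, ih, ih, jacobiCoeff_succ_one]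
    · rw [jacobiProd_succ, coeff_mul_quadratic_add_two, ih, ih, ih, jacobiCoeff_succ_add_two]

lemma prod_one_add_X_pow_sq_eq_sum_jacobiCoeff (N : ℕ) :
    ∏ j ∈ range N, (1 + X ^ (2 * j + 1) : ℤ[X]) ^ 2 =
      ∑ k ∈ range (2 * N + 1), jacobiCoeff N k := by
  have hdeg : (jacobiProd N).natDegree < 2 * N + 1 := Nat.lt_succ_of_le <|
    natDegree_le_iff_coeff_eq_zero.2 fun k hk => by rw [coeff_jacobiProd, jacobiCoeff_eq_zero hk]
  have h := congrArg (eval 1) (as_sum_range' _ _ hdeg)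
  simp only [eval_finsetSum, eval_monomial, one_pow, mul_one, coeff_jacobiProd] at h
  simpa [jacobiProd, eval_prod, sq] using h

lemma X_pow_dvd_qPochPoly_sub {s a : ℕ} (h : s ≤ a) :
    (X : ℤ[X]) ^ (s + 1) ∣ qPochPoly a - qPochPoly s := by
  induction a, h using Nat.le_induction with
  | base => simp
  | succ a hsa ih =>
    rw [qPochPoly_succ, show qPochPoly a * (1 - X ^ (a + 1)) - qPochPoly s =
      (qPochPoly a - qPochPoly s) - X ^ (a + 1) * qPochPoly a by ring]
    exact dvd_sub ih (Dvd.dvd.mul_right (pow_dvd_pow X (by omega)) _)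

lemma isCoprime_X_qPochPoly (s : ℕ) : IsCoprime X (qPochPoly s) := by
  obtain ⟨r, hr⟩ := X_dvd_sub_C (p := qPochPoly s)
  rw [coeff_zero_eq_eval_zero, eval_zero_qPochPoly, map_one] at hr
  exact ⟨-r, 1, by linear_combination hr⟩

lemma X_pow_dvd_qPochPoly_mul_qBinom_sub_one {M n k s : ℕ} (hM : s ≤ M) (hk : s ≤ k)
    (hn : s + k ≤ n) : (X : ℤ[X]) ^ (s + 1) ∣ qPochPoly M * qBinom n k - 1 := by
  set π := Ideal.Quotient.mk (Ideal.span {(X : ℤ[X]) ^ (s + 1)})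
  have hπ : ∀ {a b : ℤ[X]}, π a = π b ↔ X ^ (s + 1) ∣ a - b := by
    intro a b; rw [Ideal.Quotient.eq, Ideal.mem_span_singleton]
  have hP : ∀ {a}, s ≤ a → π (qPochPoly a) = π (qPochPoly s) := fun h =>
    hπ.2 (X_pow_dvd_qPochPoly_sub h)
  obtain ⟨u, v, huv⟩ := (isCoprime_X_qPochPoly s).pow_left (m := s + 1)
  have hinv : π v * π (qPochPoly s) = 1 := by
    have := congrArg π huv
    rwa [map_add, map_mul, map_mul, Ideal.Quotient.eq_zero_iff_mem.2
      (Ideal.mem_span_singleton_self _), mul_zero, zero_add, map_one] at this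
  have hprod := congrArg π (qBinom_mul_qPochPoly (by omega : k ≤ n))
  rw [map_mul, map_mul, hP hk, hP (by omega : s ≤ n - k), hP (by omega : s ≤ n)] at hprod
  rw [← hπ, map_mul, hP hM, map_one]
  linear_combination π v * hprod - (π (qPochPoly s) * π (qBinom n k) - 1) * hinv

lemma coeff_qPochPoly_mul_qBinom_eq_zero {M n k t : ℕ} (ht : 0 < t) (hM : t ≤ M) (hk : t ≤ k)
    (hn : t + k ≤ n) : (qPochPoly M * qBinom n k).coeff t = 0 := by
  have h := X_pow_dvd_iff.1 (X_pow_dvd_qPochPoly_mul_qBinom_sub_one hM hk hn) t t.lt_succ_self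
  rwa [coeff_sub, coeff_one, if_neg ht.ne', sub_zero] at h

lemma half_sub_jacobiExp_le {n N k : ℕ} (hN : n < N) (hk : k ≤ 2 * N) :
    (n - jacobiExp N k) / 2 ≤ k ∧ (n - jacobiExp N k) / 2 + k ≤ 2 * N := by
  set m := ((k : ℤ) - N).natAbs
  have hm : jacobiExp N k = m ^ 2 := rfl
  have hm2 : 2 * m ≤ m ^ 2 + 1 := by nlinarith [sq_nonneg ((m : ℤ) - 1)]
  rcases Int.natAbs_eq ((k : ℤ) - N) with h | h <;> omega

theorem coeff_expand_qPochPoly_mul_prod_sq_eq_zero {n N : ℕ} (hN : n < N)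
    (hsq : ¬ ∃ m, n = m ^ 2) :
    (expand ℤ 2 (qPochPoly N) * ∏ j ∈ range N, (1 + X ^ (2 * j + 1) : ℤ[X]) ^ 2).coeff n =
      0 := by
  rw [prod_one_add_X_pow_sq_eq_sum_jacobiCoeff, mul_sum, finsetSum_coeff]
  refine sum_eq_zero fun k hk => ?_
  rw [jacobiCoeff, mul_left_comm, ← map_mul, coeff_X_pow_mul', coeff_expand two_pos]
  split_ifs with ha heven
  · have hne : n ≠ jacobiExp N k := fun h => hsq ⟨_, h⟩
    obtain ⟨hle, hle'⟩ := half_sub_jacobiExp_le hN (Nat.lt_succ_iff.1 (mem_range.1 hk))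
    exact coeff_qPochPoly_mul_qBinom_eq_zero (by omega) (by omega) hle hle'
  all_goals rfl

-- Blue parts in `[1, 2N]` and odd green parts below `2N`: exactly the factors of
-- `(q²; q²)_N (-q; q²)_N²`, and large enough to contain every E-partition of `n < N`.
def partUniverse (N : ℕ) : Finset (Finset ℕ × Finset ℕ) :=
  (Icc 1 (2 * N)).powerset ×ˢ ((range N).image fun j => 2 * j + 1).powerset

lemma isEPartition_iff {n N : ℕ} (hN : n < N) {p : Finset ℕ × Finset ℕ} :
    IsEPartition n p ↔ p ∈ partUniverse N ∧ p.1.sum id + p.2.sum id = n := by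
  have hle : ∀ {s : Finset ℕ} {x}, x ∈ s → x ≤ s.sum id := fun hx =>
    single_le_sum (f := id) (fun _ _ => Nat.zero_le _) hx
  simp only [IsEPartition, partUniverse, mem_product, mem_powerset, subset_iff, mem_Icc, mem_image,
    mem_range]
  constructor
  · rintro ⟨hpos, hodd, hsum⟩
    refine ⟨⟨fun b hb => ⟨hpos b hb, ?_⟩, fun g hg => ?_⟩, hsum⟩
    · have := hle hb; omega
    · obtain ⟨j, rfl⟩ := hodd g hg
      have := hle hg
      exact ⟨j, by omega, rfl⟩
  · rintro ⟨⟨hB, hG⟩, hsum⟩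
    refine ⟨fun b hb => (hB hb).1, fun g hg => ?_, hsum⟩
    obtain ⟨j, -, rfl⟩ := hG hg
    exact odd_two_mul_add_one j

theorem sum_partUniverse_eq_expand_qPochPoly_mul (N : ℕ) :
    ∑ p ∈ partUniverse N,
        C ((-1 : ℤ) ^ #(p.1.filter fun x => Even x)) * X ^ (p.1.sum id + p.2.sum id) =
      expand ℤ 2 (qPochPoly N) * ∏ j ∈ range N, (1 + X ^ (2 * j + 1) : ℤ[X]) ^ 2 := by
  have hblue : ∏ b ∈ Icc 1 (2 * N), (1 + C (if Even b then (-1 : ℤ) else 1) * X ^ b) =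
      ∏ j ∈ range N, (1 + X ^ (2 * j + 1)) * (1 - X ^ (2 * j + 2)) := by
    rw [prod_Icc_one_two_mul]
    refine prod_congr rfl fun j _ => ?_
    simp [Nat.even_add_one, parity_simps, sub_eq_add_neg]
  have hgreen : ∏ g ∈ (range N).image (fun j => 2 * j + 1), (1 + X ^ g : ℤ[X]) =
      ∏ j ∈ range N, (1 + X ^ (2 * j + 1)) :=
    prod_image fun i _ j _ h => by omega
  have hqPoch : expand ℤ 2 (qPochPoly N) = ∏ j ∈ range N, (1 - X ^ (2 * j + 2)) := by
    rw [qPochPoly, map_prod]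
    exact prod_congr rfl fun j _ => by rw [map_sub, map_one, map_pow, expand_X, ← pow_mul]; ring
  calc _ = (∏ b ∈ Icc 1 (2 * N), (1 + C (if Even b then (-1 : ℤ) else 1) * X ^ b)) *
        ∏ g ∈ (range N).image (fun j => 2 * j + 1), (1 + X ^ g : ℤ[X]) := by
        rw [prod_one_add, prod_one_add, sum_mul_sum, partUniverse, sum_product]
        refine sum_congr rfl fun B _ => sum_congr rfl fun G _ => ?_
        rw [prod_mul_distrib, ← map_prod, prod_ite_even_neg_one, prod_pow_eq_pow_sum,
          prod_pow_eq_pow_sum, pow_add, mul_assoc]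
        rfl
    _ = _ := by
        rw [hblue, hgreen, hqPoch, ← prod_mul_distrib, ← prod_mul_distrib]
        exact prod_congr rfl fun j _ => by ring

lemma card_isEPartition_eq {n N : ℕ} (hN : n < N) (P : ℕ → Prop) [DecidablePred P] :
    Nat.card {p : Finset ℕ × Finset ℕ //
        IsEPartition n p ∧ P ((p.1.filter (fun x => Even x)).card)} =
      #((partUniverse N).filter fun p =>
        p.1.sum id + p.2.sum id = n ∧ P ((p.1.filter (fun x => Even x)).card)) := by
  rw [← Nat.card_eq_finsetCard]
  exact Nat.card_congr <| Equiv.subtypeEquivRight fun p => by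
    rw [mem_filter, isEPartition_iff hN, and_assoc]

lemma sum_filter_partUniverse_neg_one_pow_eq_zero {n N : ℕ} (hN : n < N)
    (hsq : ¬ ∃ m, n = m ^ 2) :
    ∑ p ∈ (partUniverse N).filter (fun p => p.1.sum id + p.2.sum id = n),
      (-1 : ℤ) ^ #(p.1.filter fun x => Even x) = 0 := by
  have h := congrArg (coeff · n) (sum_partUniverse_eq_expand_qPochPoly_mul N)
  simp only [finsetSum_coeff, coeff_C_mul_X_pow, coeff_expand_qPochPoly_mul_prod_sq_eq_zero hN hsq]
    at h
  rw [sum_filter]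
  exact (sum_congr rfl fun p _ => if_congr eq_comm rfl rfl).trans h

end

theorem stmt_3_general (n : ℕ) (hsq : ¬ ∃ k : ℕ, n = k ^ 2) :
    Nat.card {p : Finset ℕ × Finset ℕ //
        IsEPartition n p ∧ Even ((p.1.filter (fun x => Even x)).card)} =
    Nat.card {p : Finset ℕ × Finset ℕ //
        IsEPartition n p ∧ Odd ((p.1.filter (fun x => Even x)).card)} := by
  have hN := n.lt_succ_self
  have hsum := sum_filter_partUniverse_neg_one_pow_eq_zero hN hsq
  rw [sum_neg_one_pow_eq_card_sub_card, filter_filter, filter_filter] at hsum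
  rw [card_isEPartition_eq hN, card_isEPartition_eq hN]
  omega

theorem stmt_3 (n : ℕ) (hn : 0 < n) (hsq : ¬ ∃ k : ℕ, n = k ^ 2) :
    Nat.card {p : Finset ℕ × Finset ℕ //
        IsEPartition n p ∧ Even ((p.1.filter (fun x => Even x)).card)} =
    Nat.card {p : Finset ℕ × Finset ℕ //
        IsEPartition n p ∧ Odd ((p.1.filter (fun x => Even x)).card)} :=
  stmt_3_general n hsq
end

section
/- For |q|<1, ∑_{n≥0} q^{2n+1} (q^{2n+4};q^2)_∞ (q^{2n+2};q^2)_∞ / (q^{2n+1};q^2)_∞^2 = q/(1-q)^2 = ∑_{n≥1} n q^n. -/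
open scoped BigOperators

/-! Write `Q = q²`. By `(x Qⁿ; Q)_∞ = (x; Q)_∞ / (x; Q)_n`, the `n`-th summand is
`q (q⁴;Q)_∞ (Q;Q)_∞ / (q;Q)_∞²` times `(q;Q)_n² / ((q⁴;Q)_n (Q;Q)_n) Qⁿ`, a `₂φ₁` series.
Heine's transformation with `a = b = q`, `c = q⁴`, `z = Q` turns the latter into
`(q;Q)_∞ (q³;Q)_∞ / ((q⁴;Q)_∞ (Q;Q)_∞) · ∑ qᵐ`, and `(q;Q)_∞ = (1 - q) (q³;Q)_∞` collapses the
product to `q / (1 - q)²`.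

Heine's transformation comes from expanding `(b;q)_n / (c;q)_n` by the `q`-binomial theorem,
swapping the absolutely convergent double sum and summing again by the `q`-binomial theorem.
The `q`-binomial theorem itself follows by iterating `(1 - z) F(z) = (1 - a z) F(q z)` and
letting `qᵐ z → 0`. -/

open Filter Topology

section QPochhammer

variable {a q : ℂ}

lemma qPoch_succ (a q : ℂ) (n : ℕ) : qPoch a q (n + 1) = qPoch a q n * (1 - a * q ^ n) :=
  Finset.prod_range_succ _ _

lemma norm_mul_pow_lt_one (ha : ‖a‖ < 1) (hq : ‖q‖ ≤ 1) (n : ℕ) : ‖a * q ^ n‖ < 1 := by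
  rw [norm_mul, norm_pow]
  exact (mul_le_of_le_one_right (norm_nonneg a) (pow_le_one₀ (norm_nonneg q) hq)).trans_lt ha

lemma norm_pow_lt_one (hq : ‖q‖ < 1) {k : ℕ} (hk : k ≠ 0) : ‖q ^ k‖ < 1 := by
  rw [norm_pow]
  exact pow_lt_one₀ (norm_nonneg q) hq hk

lemma summable_norm_neg_mul_pow (a : ℂ) (hq : ‖q‖ < 1) :
    Summable fun j : ℕ ↦ ‖-(a * q ^ j)‖ := by
  simpa [norm_mul, norm_pow] using (summable_geometric_of_lt_one (norm_nonneg q) hq).mul_left ‖a‖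

lemma multipliable_one_sub_mul_pow (a : ℂ) (hq : ‖q‖ < 1) :
    Multipliable fun j : ℕ ↦ 1 - a * q ^ j := by
  simpa [sub_eq_add_neg] using multipliable_one_add_of_summable (summable_norm_neg_mul_pow a hq)

lemma tendsto_qPoch (a : ℂ) (hq : ‖q‖ < 1) :
    Tendsto (qPoch a q) atTop (𝓝 (qPochInf a q)) :=
  (multipliable_one_sub_mul_pow a hq).hasProd.tendsto_prod_nat

lemma one_sub_mul_pow_ne_zero (ha : ‖a‖ < 1) (hq : ‖q‖ ≤ 1) (j : ℕ) : 1 - a * q ^ j ≠ 0 :=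
  sub_ne_zero.2 fun h ↦ by simpa [← h] using norm_mul_pow_lt_one ha hq j

lemma qPoch_ne_zero (ha : ‖a‖ < 1) (hq : ‖q‖ ≤ 1) (n : ℕ) : qPoch a q n ≠ 0 :=
  Finset.prod_ne_zero_iff.2 fun j _ ↦ one_sub_mul_pow_ne_zero ha hq j

lemma qPochInf_ne_zero (ha : ‖a‖ < 1) (hq : ‖q‖ < 1) : qPochInf a q ≠ 0 := by
  simp_rw [qPochInf, sub_eq_add_neg]
  refine tprod_one_add_ne_zero_of_summable (fun j ↦ ?_) (summable_norm_neg_mul_pow a hq)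
  simpa [← sub_eq_add_neg] using one_sub_mul_pow_ne_zero ha hq.le j

lemma qPoch_mul_qPochInf_mul_pow (a : ℂ) (hq : ‖q‖ < 1) (n : ℕ) :
    qPoch a q n * qPochInf (a * q ^ n) q = qPochInf a q := by
  have hshift (i : ℕ) : 1 - a * q ^ n * q ^ i = 1 - a * q ^ (i + n) := by ring
  have hmul := (multipliable_one_sub_mul_pow (a * q ^ n) hq).congr hshift
  rw [qPochInf, tprod_congr hshift, qPoch, qPochInf]
  exact Multipliable.prod_mul_tprod_nat_mul' (f := fun j ↦ 1 - a * q ^ j) (k := n) hmul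

lemma qPochInf_mul_pow (ha : ‖a‖ < 1) (hq : ‖q‖ < 1) (n : ℕ) :
    qPochInf (a * q ^ n) q = qPochInf a q / qPoch a q n := by
  rw [← qPoch_mul_qPochInf_mul_pow a hq n, mul_div_cancel_left₀ _ (qPoch_ne_zero ha hq.le n)]

lemma qPochInf_eq_one_sub_mul (a : ℂ) (hq : ‖q‖ < 1) :
    qPochInf a q = (1 - a) * qPochInf (a * q) q := by
  simpa [qPoch] using (qPoch_mul_qPochInf_mul_pow a hq 1).symm

end QPochhammer

section QBinomial

variable {a q z : ℂ}

noncomputable def qBinomialSeries (a q z : ℂ) : ℂ :=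
  ∑' n : ℕ, qPoch a q n / qPoch q q n * z ^ n

lemma qBinomial_coeff_succ_mul (a : ℂ) (hq : ‖q‖ < 1) (n : ℕ) :
    qPoch a q (n + 1) / qPoch q q (n + 1) * (1 - q ^ (n + 1)) =
      qPoch a q n / qPoch q q n * (1 - a * q ^ n) := by
  have hn : 1 - q ^ (n + 1) ≠ 0 := pow_succ' q n ▸ one_sub_mul_pow_ne_zero hq hq.le n
  rw [qPoch_succ, qPoch_succ, ← pow_succ']
  field_simp

/-- The coefficients converge to `(a;q)_∞ / (q;q)_∞`, hence are bounded. -/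
lemma exists_norm_qBinomial_coeff_le (a : ℂ) (hq : ‖q‖ < 1) :
    ∃ C, ∀ n, ‖qPoch a q n / qPoch q q n‖ ≤ C := by
  have hlim := (tendsto_qPoch a hq).div (tendsto_qPoch q hq) (qPochInf_ne_zero hq hq)
  obtain ⟨C, hC⟩ := isBounded_iff_forall_norm_le.1 (Metric.isBounded_range_of_tendsto _ hlim)
  exact ⟨C, fun n ↦ hC _ ⟨n, rfl⟩⟩

lemma summable_norm_qBinomial (a : ℂ) (hq : ‖q‖ < 1) (hz : ‖z‖ < 1) :
    Summable fun n ↦ ‖qPoch a q n / qPoch q q n * z ^ n‖ := by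
  obtain ⟨C, hC⟩ := exists_norm_qBinomial_coeff_le a hq
  refine ((summable_geometric_of_lt_one (norm_nonneg z) hz).mul_left C).of_nonneg_of_le
    (fun n ↦ norm_nonneg _) fun n ↦ ?_
  rw [norm_mul, norm_pow]
  exact mul_le_mul_of_nonneg_right (hC n) (by positivity)

lemma tendsto_qBinomialSeries_nhds_zero (a : ℂ) (hq : ‖q‖ < 1) :
    Tendsto (qBinomialSeries a q) (𝓝 0) (𝓝 1) := by
  obtain ⟨C, hC⟩ := exists_norm_qBinomial_coeff_le a hq
  have hlim := tendsto_tsum_of_dominated_convergence (𝓕 := 𝓝 (0 : ℂ))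
    (f := fun w n ↦ qPoch a q n / qPoch q q n * w ^ n)
    (summable_geometric_two.mul_left C)
    (fun n ↦ ((continuous_pow n).const_mul _).tendsto 0) ?_
  · have hzero : ∑' n : ℕ, qPoch a q n / qPoch q q n * 0 ^ n = 1 := by
      rw [tsum_eq_single 0 fun n hn ↦ by simp [hn]]
      simp [qPoch]
    rwa [hzero] at hlim
  filter_upwards [Metric.closedBall_mem_nhds (0 : ℂ) (by norm_num : (0 : ℝ) < 1 / 2)]
    with w hw n
  rw [mem_closedBall_zero_iff] at hw
  rw [norm_mul, norm_pow]
  gcongr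
  · exact (norm_nonneg _).trans (hC 0)
  · exact hC n

lemma one_sub_mul_qBinomialSeries (a : ℂ) (hq : ‖q‖ < 1) (hz : ‖z‖ < 1) :
    (1 - z) * qBinomialSeries a q z = (1 - a * z) * qBinomialSeries a q (q * z) := by
  set c : ℕ → ℂ := fun n ↦ qPoch a q n / qPoch q q n
  have hqz : ‖q * z‖ < 1 := by simpa [mul_comm] using norm_mul_pow_lt_one hz hq.le 1
  have hz' := (summable_norm_qBinomial a hq hz).of_norm.hasSum
  have hqz' := (summable_norm_qBinomial a hq hqz).of_norm.hasSum
  have hdiff : HasSum (fun n ↦ c (n + 1) * (1 - q ^ (n + 1)) * z ^ (n + 1))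
      (qBinomialSeries a q z - qBinomialSeries a q (q * z)) := by
    have hsub : HasSum (fun n ↦ c n * (1 - q ^ n) * z ^ n)
        (qBinomialSeries a q z - qBinomialSeries a q (q * z)) := by
      refine (hz'.sub hqz').congr_fun fun n ↦ ?_
      rw [mul_pow]
      ring
    simpa using (hasSum_nat_add_iff' 1).2 hsub
  have hshift : HasSum (fun n ↦ z * (c n * z ^ n - a * (c n * (q * z) ^ n)))
      (z * (qBinomialSeries a q z - a * qBinomialSeries a q (q * z))) :=
    (hz'.sub (hqz'.mul_left a)).mul_left z
  have hcoeff : (fun n ↦ c (n + 1) * (1 - q ^ (n + 1)) * z ^ (n + 1)) =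
      fun n ↦ z * (c n * z ^ n - a * (c n * (q * z) ^ n)) := by
    funext n
    rw [qBinomial_coeff_succ_mul a hq n]
    ring
  rw [hcoeff] at hdiff
  linear_combination hdiff.unique hshift

lemma qPoch_mul_qBinomialSeries (a : ℂ) (hq : ‖q‖ < 1) (hz : ‖z‖ < 1) (m : ℕ) :
    qPoch z q m * qBinomialSeries a q z =
      qPoch (a * z) q m * qBinomialSeries a q (q ^ m * z) := by
  induction m with
  | zero => simp [qPoch]
  | succ m ih =>
    have hstep := one_sub_mul_qBinomialSeries (z := q ^ m * z) a hq
      (by simpa [mul_comm] using norm_mul_pow_lt_one hz hq.le m)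
    rw [← mul_assoc q, ← pow_succ'] at hstep
    rw [qPoch_succ, qPoch_succ, mul_right_comm, ih]
    linear_combination qPoch (a * z) q m * hstep

theorem tsum_qBinomial (a : ℂ) (hq : ‖q‖ < 1) (hz : ‖z‖ < 1) :
    ∑' n : ℕ, qPoch a q n / qPoch q q n * z ^ n = qPochInf (a * z) q / qPochInf z q := by
  have hpow : Tendsto (fun m : ℕ ↦ q ^ m * z) atTop (𝓝 0) := by
    simpa using (tendsto_pow_atTop_nhds_zero_of_norm_lt_one hq).mul_const z
  have hleft := (tendsto_qPoch z hq).mul_const (qBinomialSeries a q z)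
  have hright := (tendsto_qPoch (a * z) hq).mul
    ((tendsto_qBinomialSeries_nhds_zero a hq).comp hpow)
  simp_rw [Function.comp_def, ← qPoch_mul_qBinomialSeries a hq hz, mul_one] at hright
  rw [eq_div_iff (qPochInf_ne_zero hz hq), mul_comm]
  exact tendsto_nhds_unique hleft hright

end QBinomial

section Heine

variable {a b d q z : ℂ}

lemma qPoch_div_qPoch_eq_tsum (d : ℂ) (hq : ‖q‖ < 1) (hb : ‖b‖ < 1) (hbd : ‖b * d‖ < 1)
    (n : ℕ) :
    qPoch b q n / qPoch (b * d) q n = qPochInf b q / qPochInf (b * d) q *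
      ∑' m : ℕ, qPoch d q m / qPoch q q m * (b * q ^ n) ^ m := by
  rw [tsum_qBinomial d hq (norm_mul_pow_lt_one hb hq.le n),
    show d * (b * q ^ n) = b * d * q ^ n by ring, qPochInf_mul_pow hbd hq, qPochInf_mul_pow hb hq]
  have := qPochInf_ne_zero hb hq
  have := qPochInf_ne_zero hbd hq
  field_simp

/-- Heine's transformation, with the lower parameter `c` written as `b * d` so that `c / b = d`. -/
theorem tsum_heine (hq : ‖q‖ < 1) (hb : ‖b‖ < 1) (hz : ‖z‖ < 1) (hbd : ‖b * d‖ < 1)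
    (haz : ‖a * z‖ < 1) :
    ∑' n : ℕ, qPoch a q n * qPoch b q n / (qPoch (b * d) q n * qPoch q q n) * z ^ n =
      qPochInf b q * qPochInf (a * z) q / (qPochInf (b * d) q * qPochInf z q) *
        ∑' m : ℕ, qPoch d q m * qPoch z q m / (qPoch (a * z) q m * qPoch q q m) * b ^ m := by
  set A : ℕ → ℂ := fun n ↦ qPoch a q n / qPoch q q n
  set D : ℕ → ℂ := fun m ↦ qPoch d q m / qPoch q q m
  set f : ℕ → ℕ → ℂ := fun n m ↦ A n * z ^ n * (D m * (b * q ^ n) ^ m)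
  have hf : Summable (Function.uncurry f) := by
    refine Summable.of_norm_bounded
      ((summable_norm_qBinomial a hq hz).mul_norm (summable_norm_qBinomial d hq hb)) ?_
    rintro ⟨n, m⟩
    simp only [Function.uncurry_apply_pair, f, norm_mul, norm_pow, mul_pow]
    gcongr
    exact mul_le_of_le_one_right (by positivity) (pow_le_one₀ (by positivity)
      (pow_le_one₀ (norm_nonneg q) hq.le))
  have hexpand (n : ℕ) :
      qPoch a q n * qPoch b q n / (qPoch (b * d) q n * qPoch q q n) * z ^ n =
        qPochInf b q / qPochInf (b * d) q * ∑' m, f n m := by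
    rw [tsum_mul_left, mul_left_comm, ← qPoch_div_qPoch_eq_tsum d hq hb hbd n]
    ring
  have hinner (m : ℕ) : ∑' n, f n m = D m * b ^ m * (qPochInf (a * z) q / qPoch (a * z) q m) /
      (qPochInf z q / qPoch z q m) := by
    have hsum := tsum_qBinomial a hq (norm_mul_pow_lt_one hz hq.le m)
    rw [← mul_assoc, qPochInf_mul_pow haz hq, qPochInf_mul_pow hz hq] at hsum
    rw [mul_div_assoc, ← hsum, ← tsum_mul_left]
    refine tsum_congr fun n ↦ ?_
    simp only [f]
    ring
  rw [tsum_congr hexpand, tsum_mul_left, ← hf.tsum_comm, tsum_congr hinner, ← tsum_mul_left,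
    ← tsum_mul_left]
  refine tsum_congr fun m ↦ ?_
  simp only [D]
  field_simp

end Heine

section Specialization

variable {q : ℂ}

lemma pow_mul_qPochInf_div_sq_eq (hq : ‖q‖ < 1) (n : ℕ) :
    q ^ (2 * n + 1) * qPochInf (q ^ (2 * n + 4)) (q ^ 2) * qPochInf (q ^ (2 * n + 2)) (q ^ 2) /
        qPochInf (q ^ (2 * n + 1)) (q ^ 2) ^ 2 =
      q * qPochInf (q ^ 4) (q ^ 2) * qPochInf (q ^ 2) (q ^ 2) / qPochInf q (q ^ 2) ^ 2 *
        (qPoch q (q ^ 2) n * qPoch q (q ^ 2) n /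
          (qPoch (q ^ 4) (q ^ 2) n * qPoch (q ^ 2) (q ^ 2) n) * (q ^ 2) ^ n) := by
  have hq2 := norm_pow_lt_one hq two_ne_zero
  have hq4 := norm_pow_lt_one hq four_ne_zero
  rw [show q ^ (2 * n + 4) = q ^ 4 * (q ^ 2) ^ n by ring,
    show q ^ (2 * n + 2) = q ^ 2 * (q ^ 2) ^ n by ring,
    show q ^ (2 * n + 1) = q * (q ^ 2) ^ n by ring,
    qPochInf_mul_pow hq4 hq2, qPochInf_mul_pow hq2 hq2, qPochInf_mul_pow hq hq2]
  field_simp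

lemma tsum_sq_qPoch_div_eq (hq : ‖q‖ < 1) :
    ∑' n : ℕ, qPoch q (q ^ 2) n * qPoch q (q ^ 2) n /
        (qPoch (q ^ 4) (q ^ 2) n * qPoch (q ^ 2) (q ^ 2) n) * (q ^ 2) ^ n =
      qPochInf q (q ^ 2) * qPochInf (q ^ 3) (q ^ 2) /
        (qPochInf (q ^ 4) (q ^ 2) * qPochInf (q ^ 2) (q ^ 2)) * (1 - q)⁻¹ := by
  have hq2 := norm_pow_lt_one hq two_ne_zero
  have hq3 : q * q ^ 2 = q ^ 3 := by ring
  have hq4 : q * q ^ 3 = q ^ 4 := by ring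
  have hheine := tsum_heine (a := q) (d := q ^ 3) hq2 hq hq2
    (by rw [hq4]; exact norm_pow_lt_one hq four_ne_zero)
    (by rw [hq3]; exact norm_pow_lt_one hq three_ne_zero)
  have hgeom : ∑' m : ℕ, qPoch (q ^ 3) (q ^ 2) m * qPoch (q ^ 2) (q ^ 2) m /
      (qPoch (q ^ 3) (q ^ 2) m * qPoch (q ^ 2) (q ^ 2) m) * q ^ m = (1 - q)⁻¹ := by
    rw [← tsum_geometric_of_norm_lt_one hq]
    refine tsum_congr fun m ↦ ?_
    rw [div_self (mul_ne_zero (qPoch_ne_zero (norm_pow_lt_one hq three_ne_zero) hq2.le m)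
      (qPoch_ne_zero hq2 hq2.le m)), one_mul]
  rwa [hq3, hq4, hgeom] at hheine

end Specialization

theorem stmt_11 (q : ℂ) (hq : ‖q‖ < 1) :
    (∑' n : ℕ, q ^ (2 * n + 1) * qPochInf (q ^ (2 * n + 4)) (q ^ 2) *
        qPochInf (q ^ (2 * n + 2)) (q ^ 2) / (qPochInf (q ^ (2 * n + 1)) (q ^ 2)) ^ 2) =
      q / (1 - q) ^ 2 ∧
    q / (1 - q) ^ 2 = ∑' n : ℕ, (n : ℂ) * q ^ n := by
  refine ⟨?_, (tsum_coe_mul_geometric_of_norm_lt_one hq).symm⟩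
  have hq2 := norm_pow_lt_one hq two_ne_zero
  rw [tsum_congr (pow_mul_qPochInf_div_sq_eq hq), tsum_mul_left, tsum_sq_qPoch_div_eq hq,
    qPochInf_eq_one_sub_mul q hq2, ← pow_succ']
  have := qPochInf_ne_zero (norm_pow_lt_one hq three_ne_zero) hq2
  have := qPochInf_ne_zero (norm_pow_lt_one hq four_ne_zero) hq2
  have := qPochInf_ne_zero hq2 hq2
  field_simp
end
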